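/- arXiv:math/0002238 — 9 statements merged into one kernel-verified Lean document; each statement's English description precedes it below -/
import Mathlib

section
/- The linear map ∂ on the free algebra F_n sending each generator z_{A,i} to 1 (extended as a derivation) preserves the defining ideal J_n of Q_n, and hence induces a derivation ∂ of Q_n with ∂(z_{A,i}) = 1 for all A, i ∉ A. -/
/-!
A `k`-linear map `∂ : B → B` is a derivation exactly when `b ↦ b + ε ∂b` is an algebra map
`B → B[ε]`. On the free algebra, send each generator `z_{A,i}` to `z_{A,i} + ε`. This respects the
additive relations, whose two sides have the same number of terms, and, since `ε² = 0`,
`(z + ε)(z' + ε) = z z' + ε (z + z')`: the image of a multiplicative relation holds because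
both it and its additive partner hold in `Q_n`.
-/

namespace QnPaper

/-- The defining relations of the quadratic algebra `Q_n`:
for `A ⊆ {1,…,n}` and distinct `i, j ∉ A`,
`z_{A∪{i},j} + z_{A,i} = z_{A∪{j},i} + z_{A,j}` and
`z_{A∪{i},j} * z_{A,i} = z_{A∪{j},i} * z_{A,j}`. -/
inductive QRel (k : Type) [Field k] (n : ℕ) :
    FreeAlgebra k (Finset (Fin n) × Fin n) → FreeAlgebra k (Finset (Fin n) × Fin n) → Prop
  | add_rel (A : Finset (Fin n)) (i j : Fin n) (hi : i ∉ A) (hj : j ∉ A) (hij : i ≠ j) :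
      QRel k n (FreeAlgebra.ι k (insert i A, j) + FreeAlgebra.ι k (A, i))
        (FreeAlgebra.ι k (insert j A, i) + FreeAlgebra.ι k (A, j))
  | mul_rel (A : Finset (Fin n)) (i j : Fin n) (hi : i ∉ A) (hj : j ∉ A) (hij : i ≠ j) :
      QRel k n (FreeAlgebra.ι k (insert i A, j) * FreeAlgebra.ι k (A, i))
        (FreeAlgebra.ι k (insert j A, i) * FreeAlgebra.ι k (A, j))

/-- The quadratic algebra `Q_n`. -/
abbrev Q (k : Type) [Field k] (n : ℕ) := RingQuot (QRel k n)

/-- The generator `z_{A,i}` of `Q_n` (only meaningful when `i ∉ A`). -/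
def z (k : Type) [Field k] (n : ℕ) (A : Finset (Fin n)) (i : Fin n) : Q k n :=
  RingQuot.mkAlgHom k (QRel k n) (FreeAlgebra.ι k (A, i))

open TrivSqZeroExt

section SectionOfDualNumber

variable {R A : Type*} [CommSemiring R] [Semiring A] [Algebra R A]

def sndOfSection (φ : A →ₐ[R] DualNumber A) : A →ₗ[R] A where
  toFun a := (φ a).snd
  map_add' a b := by rw [map_add, snd_add]
  map_smul' c a := by rw [map_smul, snd_smul, RingHom.id_apply]

theorem sndOfSection_mul {φ : A →ₐ[R] DualNumber A} (hφ : ∀ a, (φ a).fst = a) (a b : A) :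
    sndOfSection φ (a * b) = sndOfSection φ a * b + a * sndOfSection φ b := by
  change (φ (a * b)).snd = (φ a).snd * b + a * (φ b).snd
  rw [map_mul, snd_mul, hφ, hφ, smul_eq_mul, op_smul_eq_mul, add_comm]

end SectionOfDualNumber

section PresentedAlgebra

variable {R X : Type*} [CommSemiring R] {s : FreeAlgebra R X → FreeAlgebra R X → Prop}

noncomputable def liftDualNumber (δ : X → RingQuot s) :
    FreeAlgebra R X →ₐ[R] DualNumber (RingQuot s) :=
  FreeAlgebra.lift R fun x => inl (RingQuot.mkAlgHom R s (FreeAlgebra.ι R x)) + inr (δ x)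

theorem fst_liftDualNumber (δ : X → RingQuot s) (a : FreeAlgebra R X) :
    (liftDualNumber δ a).fst = RingQuot.mkAlgHom R s a := by
  change (fstHom R _ _).comp (liftDualNumber δ) a = _
  congr 1
  ext x
  simp [liftDualNumber]

theorem exists_derivation_of_liftDualNumber_respects (δ : X → RingQuot s)
    (hδ : ∀ ⦃a b⦄, s a b → liftDualNumber δ a = liftDualNumber δ b) :
    ∃ d : RingQuot s →ₗ[R] RingQuot s, (∀ a b, d (a * b) = d a * b + a * d b) ∧
      ∀ x, d (RingQuot.mkAlgHom R s (FreeAlgebra.ι R x)) = δ x := by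
  set φ := RingQuot.liftAlgHom R ⟨liftDualNumber δ, hδ⟩
  have hφ_mk (a : FreeAlgebra R X) : φ (RingQuot.mkAlgHom R s a) = liftDualNumber δ a :=
    RingQuot.liftAlgHom_mkAlgHom_apply R _ hδ a
  have hφ : ∀ a, (φ a).fst = a := by
    intro a
    obtain ⟨a, rfl⟩ := RingQuot.mkAlgHom_surjective R s a
    rw [hφ_mk, fst_liftDualNumber]
  refine ⟨sndOfSection φ, sndOfSection_mul hφ, fun x => ?_⟩
  change (φ _).snd = _
  simp [hφ_mk, liftDualNumber]

end PresentedAlgebra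

theorem inl_add_inr_one_mul_inl_add_inr_one {A : Type*} [Semiring A] (u v : A) :
    (inl u + inr 1 : DualNumber A) * (inl v + inr 1) = inl (u * v) + inr (u + v) := by
  ext <;> simp [add_comm]

theorem z_add_rel (k : Type) [Field k] (n : ℕ) {A : Finset (Fin n)} {i j : Fin n}
    (hi : i ∉ A) (hj : j ∉ A) (hij : i ≠ j) :
    z k n (insert i A) j + z k n A i = z k n (insert j A) i + z k n A j := by
  simpa only [z, map_add] using RingQuot.mkAlgHom_rel k (QRel.add_rel A i j hi hj hij)

theorem z_mul_rel (k : Type) [Field k] (n : ℕ) {A : Finset (Fin n)} {i j : Fin n}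
    (hi : i ∉ A) (hj : j ∉ A) (hij : i ≠ j) :
    z k n (insert i A) j * z k n A i = z k n (insert j A) i * z k n A j := by
  simpa only [z, map_mul] using RingQuot.mkAlgHom_rel k (QRel.mul_rel A i j hi hj hij)

theorem liftDualNumber_one_respects_QRel (k : Type) [Field k] (n : ℕ)
    {a b : FreeAlgebra k (Finset (Fin n) × Fin n)} (h : QRel k n a b) :
    liftDualNumber (fun _ => (1 : Q k n)) a = liftDualNumber (fun _ => (1 : Q k n)) b := by
  have lift_ι (p : Finset (Fin n) × Fin n) :
      liftDualNumber (fun _ => (1 : Q k n)) (FreeAlgebra.ι k p) = inl (z k n p.1 p.2) + inr 1 :=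
    FreeAlgebra.lift_ι_apply _ _
  cases h with
  | add_rel A i j hi hj hij =>
    simp only [map_add, lift_ι]
    rw [add_add_add_comm, ← inl_add, z_add_rel k n hi hj hij, inl_add, add_add_add_comm]
  | mul_rel A i j hi hj hij =>
    simp only [map_mul, lift_ι, inl_add_inr_one_mul_inl_add_inr_one]
    rw [z_mul_rel k n hi hj hij, z_add_rel k n hi hj hij]

/-- The derivation on the free algebra sending each generator to `1` preserves the
defining relations, hence induces a derivation of `Q n` sending each generator to `1`. -/
theorem stmt1 (k : Type) [Field k] (n : ℕ) :
    ∃ d : Q k n →ₗ[k] Q k n,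
      (∀ a b : Q k n, d (a * b) = d a * b + a * d b) ∧
      ∀ (A : Finset (Fin n)) (i : Fin n), i ∉ A → d (z k n A i) = 1 := by
  obtain ⟨d, hd_mul, hd_gen⟩ :=
    exists_derivation_of_liftDualNumber_respects _
      fun _ _ h => liftDualNumber_one_respects_QRel k n h
  exact ⟨d, hd_mul, fun A i _ => hd_gen (A, i)⟩
end QnPaper
end

section
/- The antiautomorphism θ of the free algebra F_n defined on generators by θ(z_{A,i}) = z_{({1,...,n}∖A)∖{i}, i} preserves the defining ideal J_n of Q_n, and hence induces an antiautomorphism of Q_n. -/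
/-!
Reversing products turns each defining relation of `Q_n` into another one. For `i ≠ j` outside
`A`, put `C = (univ \ A) \ {i, j}`: the index map sends `(A ∪ {i}, j)`, `(A, i)`,
`(A ∪ {j}, i)`, `(A, j)` to `(C, j)`, `(C ∪ {j}, i)`, `(C, i)`, `(C ∪ {i}, j)`, so both
reversed relations for `(A, i, j)` are the corresponding relations for `(C, j, i)`. Since the
index map is an involution, the induced antihomomorphism of `Q_n` is its own inverse.
-/

namespace QnPaper

open Finset MulOpposite
open scoped symmDiff

section AntiLift

variable {R X : Type*} [CommSemiring R] (r : FreeAlgebra R X → FreeAlgebra R X → Prop)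

noncomputable def genOpLift (f : X → X) : FreeAlgebra R X →ₐ[R] (RingQuot r)ᵐᵒᵖ :=
  FreeAlgebra.lift R fun x => op (RingQuot.mkAlgHom R r (FreeAlgebra.ι R (f x)))

variable {r} {f : X → X} (hf : ∀ ⦃a b⦄, r a b → genOpLift r f a = genOpLift r f b)

noncomputable def quotOpLift : RingQuot r →ₐ[R] (RingQuot r)ᵐᵒᵖ :=
  RingQuot.liftAlgHom R ⟨genOpLift r f, hf⟩

theorem quotOpLift_mkAlgHom_ι (x : X) :
    quotOpLift hf (RingQuot.mkAlgHom R r (FreeAlgebra.ι R x))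
      = op (RingQuot.mkAlgHom R r (FreeAlgebra.ι R (f x))) := by
  simp [quotOpLift, genOpLift]

theorem unop_quotOpLift_involutive (hinv : Function.Involutive f) :
    Function.Involutive fun x => (quotOpLift hf x).unop := by
  intro x
  obtain ⟨y, rfl⟩ := RingQuot.mkAlgHom_surjective R r x
  induction y using FreeAlgebra.induction with
  | grade0 c => simp only [AlgHom.commutes, MulOpposite.algebraMap_apply, unop_op]
  | grade1 x => simp only [quotOpLift_mkAlgHom_ι, unop_op, hinv x]
  | mul a b ha hb => simp only [map_mul, unop_mul, ha, hb]
  | add a b ha hb => simp only [map_add, unop_add, ha, hb]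

noncomputable def quotAntiEquiv (hinv : Function.Involutive f) : RingQuot r ≃ₗ[R] RingQuot r :=
  LinearEquiv.ofInvolutive ((opLinearEquiv R).symm.toLinearMap ∘ₗ (quotOpLift hf).toLinearMap)
    (unop_quotOpLift_involutive hf hinv)

theorem quotAntiEquiv_apply (hinv : Function.Involutive f) (x : RingQuot r) :
    quotAntiEquiv hf hinv x = (quotOpLift hf x).unop :=
  rfl

end AntiLift

section DualIndex

variable {α : Type*} [Fintype α] [DecidableEq α]

/-- For `i ∉ A` this is `((univ \ A).erase i, i)` (see `dualIndex_of_notMem`); the symmetric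
difference extends it to an involution of all indices, including those with `i ∈ A`. -/
def dualIndex (p : Finset α × α) : Finset α × α :=
  (p.1ᶜ ∆ {p.2}, p.2)

theorem dualIndex_involutive : Function.Involutive (dualIndex (α := α)) := by
  rintro ⟨A, i⟩
  ext x
  · simp only [dualIndex, mem_symmDiff, mem_compl, mem_singleton]
    tauto
  · rfl

theorem dualIndex_of_notMem {A : Finset α} {i : α} (hi : i ∉ A) :
    dualIndex (A, i) = ((univ \ A).erase i, i) := by
  ext x
  · simp only [dualIndex, mem_symmDiff, mem_compl, mem_singleton, mem_erase, mem_sdiff,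
      mem_univ, true_and]
    grind
  · rfl

variable {A : Finset α} {i j : α}

theorem dualIndex_insert (hj : j ∉ A) (hij : i ≠ j) :
    dualIndex (insert i A, j) = ((univ \ A) \ {i, j}, j) := by
  ext x
  · simp only [dualIndex, mem_symmDiff, mem_compl, mem_insert, mem_singleton, mem_sdiff,
      mem_univ, true_and]
    grind
  · rfl

theorem dualIndex_eq_insert (hi : i ∉ A) (hj : j ∉ A) (hij : i ≠ j) :
    dualIndex (A, i) = (insert j ((univ \ A) \ {i, j}), i) := by
  ext x
  · simp only [dualIndex, mem_symmDiff, mem_compl, mem_insert, mem_singleton, mem_sdiff,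
      mem_univ, true_and]
    grind
  · rfl

end DualIndex

theorem genOpLift_dualIndex_eq_of_QRel (k : Type) [Field k] (n : ℕ)
    ⦃a b : FreeAlgebra k (Finset (Fin n) × Fin n)⦄ (h : QRel k n a b) :
    genOpLift (QRel k n) dualIndex a = genOpLift (QRel k n) dualIndex b := by
  obtain ⟨A, i, j, hi, hj, hij⟩ | ⟨A, i, j, hi, hj, hij⟩ := h
  all_goals
    set C := (univ \ A) \ {i, j} with hC
    have hiC : i ∉ C := by simp [hC]
    have hjC : j ∉ C := by simp [hC]
    simp only [genOpLift, map_add, map_mul, FreeAlgebra.lift_ι_apply, dualIndex_insert hj hij,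
      dualIndex_insert hi hij.symm, dualIndex_eq_insert hi hj hij,
      dualIndex_eq_insert hj hi hij.symm, pair_comm j i, ← hC, ← op_add, ← op_mul, op_inj]
  · simpa only [map_add, add_comm] using
      RingQuot.mkAlgHom_rel k (QRel.add_rel C j i hjC hiC hij.symm)
  · simpa only [map_mul] using RingQuot.mkAlgHom_rel k (QRel.mul_rel C j i hjC hiC hij.symm)

/-- The map sending the generator indexed by `(A, i)` to the one indexed by
`(({1,…,n} ∖ A) ∖ {i}, i)` induces an antiautomorphism of `Q n`. -/
theorem stmt2 (k : Type) [Field k] (n : ℕ) :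
    ∃ θ : Q k n ≃ₗ[k] Q k n,
      (∀ a b : Q k n, θ (a * b) = θ b * θ a) ∧
      θ 1 = 1 ∧
      ∀ (A : Finset (Fin n)) (i : Fin n), i ∉ A →
        θ (z k n A i) = z k n ((Finset.univ \ A).erase i) i := by
  let θ := quotAntiEquiv (genOpLift_dualIndex_eq_of_QRel k n) dualIndex_involutive
  refine ⟨θ, fun a b => ?_, ?_, fun A i hi => ?_⟩
  · simp only [θ, quotAntiEquiv_apply, map_mul, unop_mul]
  · simp only [θ, quotAntiEquiv_apply, map_one, unop_one]
  · simp only [θ, quotAntiEquiv_apply, z, quotOpLift_mkAlgHom_ι, dualIndex_of_notMem hi, unop_op]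

end QnPaper
end

section
/- The map φ from Q_n to K_n = k[v_1,...,v_n]/(v_i² + v_i : 1 ≤ i ≤ n) defined on generators by φ(z_{A,i}) = w_i · ∏_{j∈A}(1 + w_j), where w_i = v_i mod the ideal, is a well-defined algebra homomorphism. -/
namespace QnPaper

/-- The ideal generated by the elements `v i ^ 2 + v i`. -/
noncomputable def In (k : Type) [Field k] (n : ℕ) : Ideal (MvPolynomial (Fin n) k) :=
  Ideal.span (Set.range fun i : Fin n =>
    (MvPolynomial.X i ^ 2 + MvPolynomial.X i : MvPolynomial (Fin n) k))

/-- The commutative algebra `K n`, polynomials modulo the ideal of the `v i ^ 2 + v i`. -/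
abbrev Kn (k : Type) [Field k] (n : ℕ) := MvPolynomial (Fin n) k ⧸ In k n

/-- The image `w i` of `v i` in `K n`. -/
noncomputable def w (k : Type) [Field k] (n : ℕ) (i : Fin n) : Kn k n :=
  Ideal.Quotient.mk (In k n) (MvPolynomial.X i)

section Lift

variable {k : Type} [Field k] {n : ℕ} {R : Type*} [Semiring R] [Algebra k R]

def Q.lift (f : Finset (Fin n) × Fin n → R)
    (hadd : ∀ A i j, i ∉ A → j ∉ A → i ≠ j →
      f (insert i A, j) + f (A, i) = f (insert j A, i) + f (A, j))
    (hmul : ∀ A i j, i ∉ A → j ∉ A → i ≠ j →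
      f (insert i A, j) * f (A, i) = f (insert j A, i) * f (A, j)) :
    Q k n →ₐ[k] R :=
  RingQuot.liftAlgHom k ⟨FreeAlgebra.lift k f, fun _ _ h => by
    induction h with
    | add_rel A i j hi hj hij => simpa using hadd A i j hi hj hij
    | mul_rel A i j hi hj hij => simpa using hmul A i j hi hj hij⟩

@[simp]
theorem Q.lift_z (f : Finset (Fin n) × Fin n → R) hadd hmul (A : Finset (Fin n)) (i : Fin n) :
    Q.lift (k := k) f hadd hmul (z k n A i) = f (A, i) := by
  simp [Q.lift, z]

end Lift

section Weight

variable {ι R : Type*} [DecidableEq ι] [CommRing R]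

def weight (u : ι → R) (p : Finset ι × ι) : R :=
  u p.2 * ∏ j ∈ p.1, (1 + u j)

theorem weight_insert_add_comm (u : ι → R) {A : Finset ι} {i j : ι} (hi : i ∉ A) (hj : j ∉ A) :
    weight u (insert i A, j) + weight u (A, i) = weight u (insert j A, i) + weight u (A, j) := by
  simp only [weight, Finset.prod_insert hi, Finset.prod_insert hj]
  ring

/-- Both sides of the multiplicative relation vanish, because `u i * (1 + u i) = 0`. -/
theorem weight_insert_mul_eq_zero {u : ι → R} {A : Finset ι} {i : ι} (hi : i ∉ A) (j : ι)
    (hu : u i ^ 2 + u i = 0) : weight u (insert i A, j) * weight u (A, i) = 0 := by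
  simp only [weight, Finset.prod_insert hi]
  linear_combination (u j * (∏ l ∈ A, (1 + u l)) ^ 2) * hu

end Weight

theorem w_sq_add_self (k : Type) [Field k] (n : ℕ) (i : Fin n) : w k n i ^ 2 + w k n i = 0 := by
  have hmem : (MvPolynomial.X i ^ 2 + MvPolynomial.X i : MvPolynomial (Fin n) k) ∈ In k n :=
    Ideal.subset_span ⟨i, rfl⟩
  simpa only [w, map_add, map_pow] using Ideal.Quotient.eq_zero_iff_mem.mpr hmem

/-- There is a well-defined algebra homomorphism from `Q n` to `K n` sending each
generator (with `i ∉ A`) to `w i * ∏_{j ∈ A} (1 + w j)`. -/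
theorem stmt3 (k : Type) [Field k] (n : ℕ) :
    ∃ φ : Q k n →ₐ[k] Kn k n,
      ∀ (A : Finset (Fin n)) (i : Fin n), i ∉ A →
        φ (z k n A i) = w k n i * ∏ j ∈ A, (1 + w k n j) := by
  refine ⟨Q.lift (weight (w k n))
    (fun A i j hi hj _ => weight_insert_add_comm _ hi hj)
    (fun A i j hi hj _ => by
      rw [weight_insert_mul_eq_zero hi j (w_sq_add_self k n i),
        weight_insert_mul_eq_zero hj i (w_sq_add_self k n j)]), fun A i _ => ?_⟩
  simp [weight]
end QnPaper
end

section
/- The restriction of φ to T̄_n = span{z_{A,i}} + k·1 ⊆ Q_n is a vector space isomorphism onto K_n = k[v_1,...,v_n]/(v_i² + v_i). -/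
/-!
The squarefree monomials `w_S = ∏_{i ∈ S} w_i` form a basis of `K_n`: they span because
`w_i² = -w_i`, and they are independent because evaluating at the point that is `-1` on `T` and
`0` elsewhere sends `w_S` to `±[S ⊆ T]`, a triangular system. Hence `dim K_n = 2^n`.

The additive relations rewrite every generator `z_{A,i}` in terms of `1` and the generators with
`i < min A`, one for each nonempty subset of `{1, …, n}`, so `dim T̄_n ≤ 2^n`.

Finally `φ(z_{S∖i, i}) = w_i ∏_{j ∈ S∖i} (1 + w_j)` is `w_S` plus monomials `w_T` with
`T ⊊ S`, so by induction every `w_S` lies in `φ(T̄_n)`. A surjection from a space of dimension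
at most `2^n` onto one of dimension `2^n` is bijective.
-/

namespace QnPaper

/-- The span of `1` together with all the generators (with `i ∉ A`). -/
def Tbar (k : Type) [Field k] (n : ℕ) : Submodule k (Q k n) :=
  Submodule.span k
    ({1} ∪ {x | ∃ (A : Finset (Fin n)) (i : Fin n), i ∉ A ∧ x = z k n A i})

open MvPolynomial Finset Module

variable {k : Type} [Field k] {n : ℕ}

lemma _root_.LinearMap.bijective_of_surjective_of_finrank_le {K V W : Type*} [DivisionRing K]
    [AddCommGroup V] [Module K V] [AddCommGroup W] [Module K W] [FiniteDimensional K V]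
    {f : V →ₗ[K] W} (hf : Function.Surjective f) (h : finrank K V ≤ finrank K W) :
    Function.Bijective f := by
  have := Module.Finite.of_surjective f hf
  have hrank := h.antisymm (LinearMap.finrank_le_finrank_of_surjective hf)
  exact ⟨(LinearMap.injective_iff_surjective_of_finrank_eq_finrank hrank).mpr hf, hf⟩

section Kn

variable (k) in
noncomputable def wProd (S : Finset (Fin n)) : Kn k n := ∏ i ∈ S, w k n i

lemma w_sq (i : Fin n) : w k n i ^ 2 = -w k n i := by
  have h : w k n i ^ 2 + w k n i = 0 :=
    Ideal.Quotient.eq_zero_iff_mem.mpr (Ideal.subset_span ⟨i, rfl⟩)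
  linear_combination h

lemma wProd_mul_w (S : Finset (Fin n)) (i : Fin n) :
    wProd k S * w k n i = if i ∈ S then -wProd k S else wProd k (insert i S) := by
  split_ifs with hi
  · rw [wProd, ← prod_erase_mul S _ hi]
    linear_combination (∏ j ∈ S.erase i, w k n j) * w_sq (k := k) i
  · rw [wProd, wProd, prod_insert hi, mul_comm]

lemma mul_w_mem_span_wProd {x : Kn k n} (hx : x ∈ Submodule.span k (Set.range (wProd k)))
    (i : Fin n) : x * w k n i ∈ Submodule.span k (Set.range (wProd k)) := by
  induction hx using Submodule.span_induction with
  | mem y hy =>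
    obtain ⟨S, rfl⟩ := hy
    rw [wProd_mul_w]
    split_ifs
    · exact Submodule.neg_mem _ (Submodule.subset_span ⟨S, rfl⟩)
    · exact Submodule.subset_span ⟨_, rfl⟩
  | zero => simp
  | add _ _ _ _ hx hy => rw [add_mul]; exact Submodule.add_mem _ hx hy
  | smul a _ _ hx => rw [smul_mul_assoc]; exact Submodule.smul_mem _ a hx

lemma span_wProd : Submodule.span k (Set.range (wProd k (n := n))) = ⊤ := by
  refine Submodule.eq_top_iff'.mpr fun x => ?_
  obtain ⟨p, rfl⟩ := Ideal.Quotient.mk_surjective x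
  induction p using MvPolynomial.induction_on with
  | C a =>
    have h : Ideal.Quotient.mk (In k n) (C a) = a • wProd k ∅ := by
      rw [wProd, prod_empty, ← Algebra.algebraMap_eq_smul_one]; rfl
    rw [h]
    exact Submodule.smul_mem _ a (Submodule.subset_span ⟨∅, rfl⟩)
  | add p q hp hq => rw [map_add]; exact Submodule.add_mem _ hp hq
  | mul_X p i hp => rw [map_mul]; exact mul_w_mem_span_wProd hp i

variable (k) in
noncomputable def evalAt (T : Finset (Fin n)) : Kn k n →ₐ[k] k :=
  Ideal.Quotient.liftₐ (In k n) (aeval fun i => if i ∈ T then -1 else 0) fun p hp => by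
    refine (Ideal.span_le (I := RingHom.ker (aeval _).toRingHom)).mpr ?_ hp
    rintro _ ⟨i, rfl⟩
    by_cases hi : i ∈ T <;> simp [hi]

lemma evalAt_wProd (T S : Finset (Fin n)) :
    evalAt k T (wProd k S) = if S ⊆ T then (-1) ^ #S else 0 := by
  have hw (i : Fin n) : evalAt k T (w k n i) = if i ∈ T then -1 else 0 := aeval_X _ i
  simp only [wProd, map_prod, hw]
  split_ifs with hST
  · rw [prod_congr rfl fun i hi => if_pos (hST hi), prod_const]
  · obtain ⟨i, hiS, hiT⟩ := not_subset.mp hST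
    exact prod_eq_zero hiS (if_neg hiT)

lemma linearIndependent_wProd : LinearIndependent k (wProd k (n := n)) := by
  refine Fintype.linearIndependent_iff.mpr fun c hc S => ?_
  induction S using Finset.strongInduction with
  | H S ih =>
  -- evaluating at `S` kills every `wProd k S'` with `S' ⊄ S`,
  -- and the coefficients of the `S' ⊂ S` vanish by induction
  have hS := congrArg (evalAt k S) hc
  rw [map_sum, map_zero, sum_eq_single S] at hS
  · simpa [evalAt_wProd] using hS
  · intro S' _ hS'
    rw [map_smul, evalAt_wProd]
    split_ifs with hsub
    · rw [ih S' (hsub.ssubset_of_ne hS'), zero_smul]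
    · rw [smul_zero]
  · simp

lemma finrank_Kn : finrank k (Kn k n) = 2 ^ n := by
  rw [finrank_eq_card_basis (Basis.mk linearIndependent_wProd span_wProd.ge),
    Fintype.card_finset, Fintype.card_fin]

lemma w_mul_prod_one_add {A : Finset (Fin n)} {i : Fin n} (hi : i ∉ A) :
    w k n i * ∏ j ∈ A, (1 + w k n j) = ∑ B ∈ A.powerset, wProd k (insert i B) := by
  rw [prod_one_add, mul_sum]
  refine sum_congr rfl fun B hB => ?_
  rw [wProd, prod_insert fun h => hi (mem_powerset.mp hB h)]

end Kn

section Tbar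

lemma z_add_z {A : Finset (Fin n)} {i j : Fin n} (hi : i ∉ A) (hj : j ∉ A) (hij : i ≠ j) :
    z k n (insert i A) j + z k n A i = z k n (insert j A) i + z k n A j := by
  have h := RingQuot.mkAlgHom_rel k (QRel.add_rel (k := k) A i j hi hj hij)
  rwa [map_add, map_add] at h

variable (k) in
noncomputable def zMin (S : Finset (Fin n)) : Q k n :=
  if h : S.Nonempty then z k n (S.erase (S.min' h)) (S.min' h) else 1

lemma zMin_insert {A : Finset (Fin n)} {i : Fin n} (hi : i ∉ A) (hlt : ∀ a ∈ A, i < a) :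
    zMin k (insert i A) = z k n A i := by
  have hmin : (insert i A).min' (insert_nonempty i A) = i :=
    le_antisymm (min'_le _ i (mem_insert_self i A))
      (le_min' _ _ _ fun a ha => (mem_insert.mp ha).elim ge_of_eq fun ha => (hlt a ha).le)
  rw [zMin, dif_pos (insert_nonempty i A), hmin, erase_insert hi]

lemma z_mem_span_zMin (A : Finset (Fin n)) {i : Fin n} (hi : i ∉ A) :
    z k n A i ∈ Submodule.span k (Set.range (zMin k)) := by
  induction A using Finset.strongInduction generalizing i with
  | H A ih =>
  by_cases hlt : ∀ a ∈ A, i < a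
  · exact zMin_insert (k := k) hi hlt ▸ Submodule.subset_span ⟨_, rfl⟩
  -- otherwise `j = min A < i`, and the additive relation for `A \ {j}`, `i`, `j` rewrites
  -- `z_{A,i}` through `z_{(A \ {j}) ∪ {i}, j} = zMin (A ∪ {i})` and two generators
  -- over `A \ {j}`
  obtain ⟨a, ha, hai⟩ := not_forall₂.mp hlt
  have hA : A.Nonempty := ⟨a, ha⟩
  set j := A.min' hA
  have hj : j ∈ A := min'_mem A hA
  have hji : j < i := (min'_le A a ha).trans_lt ((not_lt.mp hai).lt_of_ne fun h => hi (h ▸ ha))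
  have hiA' : i ∉ A.erase j := fun h => hi (mem_of_mem_erase h)
  have hjA' : j ∉ A.erase j := notMem_erase j A
  have hrel := z_add_z (k := k) hiA' hjA' hji.ne'
  rw [insert_erase hj] at hrel
  have hmin : zMin k (insert j (insert i (A.erase j))) = z k n (insert i (A.erase j)) j := by
    refine zMin_insert ?_ fun b hb => ?_
    · exact mem_insert.not.mpr (not_or.mpr ⟨hji.ne, hjA'⟩)
    · rcases mem_insert.mp hb with rfl | hb
      · exact hji
      · exact lt_of_le_of_ne (min'_le A b (mem_of_mem_erase hb)) fun h => hjA' (h ▸ hb)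
  rw [eq_sub_of_add_eq hrel.symm, ← hmin]
  refine Submodule.sub_mem _ (Submodule.add_mem _ (Submodule.subset_span ⟨_, rfl⟩) ?_) ?_
  · exact ih _ (erase_ssubset hj) hiA'
  · exact ih _ (erase_ssubset hj) hjA'

lemma Tbar_le_span_zMin : Tbar k n ≤ Submodule.span k (Set.range (zMin k)) := by
  refine Submodule.span_le.mpr ?_
  rintro x (rfl | ⟨A, i, hi, rfl⟩)
  · exact Submodule.subset_span ⟨∅, dif_neg Finset.not_nonempty_empty⟩
  · exact z_mem_span_zMin A hi

instance : FiniteDimensional k (Tbar k n) :=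
  have := Module.Finite.span_of_finite k (Set.finite_range (zMin k (n := n)))
  Submodule.finiteDimensional_of_le Tbar_le_span_zMin

lemma finrank_Tbar_le : finrank k (Tbar k n) ≤ 2 ^ n :=
  have := Module.Finite.span_of_finite k (Set.finite_range (zMin k (n := n)))
  calc finrank k (Tbar k n)
      ≤ finrank k (Submodule.span k (Set.range (zMin k (n := n)))) :=
        Submodule.finrank_mono Tbar_le_span_zMin
    _ ≤ Fintype.card (Finset (Fin n)) := finrank_range_le_card _
    _ = 2 ^ n := by rw [Fintype.card_finset, Fintype.card_fin]

end Tbar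

lemma wProd_mem_map_Tbar {φ : Q k n →ₐ[k] Kn k n}
    (hφ : ∀ (A : Finset (Fin n)) (i : Fin n), i ∉ A →
      φ (z k n A i) = w k n i * ∏ j ∈ A, (1 + w k n j)) (S : Finset (Fin n)) :
    wProd k S ∈ (Tbar k n).map φ.toLinearMap := by
  induction S using Finset.strongInduction with
  | H S ih =>
  obtain rfl | ⟨i, hi⟩ := S.eq_empty_or_nonempty
  · exact ⟨1, Submodule.subset_span (Or.inl rfl), map_one φ⟩
  -- `φ z_{S \ {i}, i}` is `wProd S` plus `wProd` of proper subsets of `S`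
  have hz : φ (z k n (S.erase i) i) ∈ (Tbar k n).map φ.toLinearMap :=
    ⟨_, Submodule.subset_span (Or.inr ⟨_, i, notMem_erase i S, rfl⟩), rfl⟩
  rw [hφ _ _ (notMem_erase i S), w_mul_prod_one_add (notMem_erase i S),
    ← add_sum_erase _ _ (mem_powerset_self _), insert_erase hi] at hz
  refine (Submodule.add_mem_iff_left _ (Submodule.sum_mem _ fun B hB => ih _ ?_)).mp hz
  rw [mem_erase, mem_powerset] at hB
  have := hB.2.ssubset_of_ne hB.1
  grind

/-- The restriction of the homomorphism of Statement 3 to the span of `1` and the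
generators is a vector-space isomorphism onto `K n`. -/
theorem stmt5 (k : Type) [Field k] (n : ℕ) (φ : Q k n →ₐ[k] Kn k n)
    (hφ : ∀ (A : Finset (Fin n)) (i : Fin n), i ∉ A →
      φ (z k n A i) = w k n i * ∏ j ∈ A, (1 + w k n j)) :
    Function.Bijective (fun x : Tbar k n => φ x.1) := by
  have hsurj : Function.Surjective (φ.toLinearMap ∘ₗ (Tbar k n).subtype) := by
    rw [← LinearMap.range_eq_top, LinearMap.range_comp, Submodule.range_subtype, eq_top_iff,
      ← span_wProd, Submodule.span_le]
    rintro _ ⟨S, rfl⟩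
    exact wProd_mem_map_Tbar hφ S
  exact LinearMap.bijective_of_surjective_of_finrank_le (V := Tbar k n) (W := Kn k n) hsurj
    ((finrank_Tbar_le (k := k) (n := n)).trans_eq finrank_Kn.symm)

end QnPaper
end

section
/- In Q_n, for any subset A = {i_1,...,i_r} of {1,...,n}, the element r(A) := z_{i_1} + z_{{i_1},i_2} + z_{{i_1,i_2},i_3} + ... + z_{{i_1,...,i_{r-1}},i_r} is independent of the chosen ordering of A. -/
namespace QnPaper

/-- `rAux s [i₁,…,i_r] = z_{s,i₁} + z_{s∪{i₁},i₂} + ⋯`. -/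
def rAux (k : Type) [Field k] (n : ℕ) (s : Finset (Fin n)) : List (Fin n) → Q k n
  | [] => 0
  | a :: l => z k n s a + rAux k n (insert a s) l

/-- `r(A) = z_{A,∅}`, computed using the increasing ordering of `A`. -/
def rFin (k : Type) [Field k] (n : ℕ) (A : Finset (Fin n)) : Q k n :=
  rAux k n ∅ (A.sort (· ≤ ·))

/-- `u(B) = z_{∅,B} = ∑_{D ⊆ B} (-1)^{|B|-|D|} r(D)`. -/
def uFin (k : Type) [Field k] (n : ℕ) (B : Finset (Fin n)) : Q k n :=
  ∑ D ∈ B.powerset, (-1 : Q k n) ^ (B.card - D.card) * rFin k n D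

section

variable {k : Type} [Field k] {n : ℕ}

theorem z_insert_add_z (A : Finset (Fin n)) {i j : Fin n} (hi : i ∉ A) (hj : j ∉ A)
    (hij : i ≠ j) :
    z k n (insert i A) j + z k n A i = z k n (insert j A) i + z k n A j := by
  simpa only [z, map_add] using
    RingQuot.mkAlgHom_rel k (QRel.add_rel (k := k) A i j hi hj hij)

theorem rAux_cons_cons_comm {s : Finset (Fin n)} {a b : Fin n} (l : List (Fin n))
    (ha : a ∉ s) (hb : b ∉ s) (hab : a ≠ b) :
    rAux k n s (a :: b :: l) = rAux k n s (b :: a :: l) := by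
  simp only [rAux, Finset.insert_comm a b s, ← add_assoc]
  rw [add_comm (z k n s a), z_insert_add_z s ha hb hab, add_comm (z k n s b)]

theorem rAux_perm {l₁ l₂ : List (Fin n)} (h : l₁.Perm l₂) (hl : l₁.Nodup)
    {s : Finset (Fin n)} (hs : ∀ a ∈ l₁, a ∉ s) :
    rAux k n s l₁ = rAux k n s l₂ := by
  induction h generalizing s with
  | nil => rfl
  | cons a _ ih =>
    obtain ⟨ha, hl⟩ := List.nodup_cons.mp hl
    refine congrArg (z k n s a + ·) (ih hl fun b hb => ?_)
    rw [Finset.mem_insert, not_or]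
    exact ⟨fun hba => ha (hba ▸ hb), hs b (List.mem_cons_of_mem a hb)⟩
  | swap a b l =>
    have hba : b ≠ a := fun e => (List.nodup_cons.mp hl).1 (by simp [e])
    exact rAux_cons_cons_comm l (hs b (by simp)) (hs a (by simp)) hba
  | trans h₁₂ _ ih₁₂ ih₂₃ =>
    rw [ih₁₂ hl hs, ih₂₃ (h₁₂.nodup hl) fun a ha => hs a (h₁₂.mem_iff.mpr ha)]

end

/-- `r(A)` is independent of the chosen ordering of `A`. -/
theorem stmt6 (k : Type) [Field k] (n : ℕ) (l₁ l₂ : List (Fin n))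
    (h₁ : l₁.Nodup) (h₂ : l₂.Nodup) (h : l₁.toFinset = l₂.toFinset) :
    rAux k n ∅ l₁ = rAux k n ∅ l₂ :=
  rAux_perm (List.perm_of_nodup_nodup_toFinset_eq h₁ h₂ h) h₁ fun a _ => Finset.notMem_empty a

end QnPaper
end

section
/- Let R be a division ring and x_1, x_2 ∈ R with x_1 ≠ x_2. Define x_{1,2} = (x_2 - x_1)x_2(x_2 - x_1)^{-1} and x_{2,1} = (x_1 - x_2)x_1(x_1 - x_2)^{-1}. Then x_{1,2} + x_1 = x_{2,1} + x_2 and x_{1,2}·x_1 = x_{2,1}·x_2. -/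
/-!
Put `d = x₂ - x₁`. Since `x₁ - x₂ = -d`, both `x_{1,2}` and `x_{2,1}` are conjugates by `d`, of `x₂`
and `x₁` respectively. Conjugation by `d` fixes `d = x₂ - x₁`, which gives the additive identity. For
the multiplicative one it suffices that `x₂ d⁻¹ x₁ = x₁ d⁻¹ x₂`; writing `x₂ = d + x₁` on the left and
on the right, both sides equal `x₁ + x₁ d⁻¹ x₁`.
-/

section DivisionRing

variable {R : Type*} [DivisionRing R]

theorem neg_mul_mul_inv_neg (a b : R) : -a * b * (-a)⁻¹ = a * b * a⁻¹ := by
  rw [inv_neg, mul_neg, neg_mul, neg_mul, neg_neg]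

theorem mul_inv_sub_mul_comm (a b : R) : a * (a - b)⁻¹ * b = b * (a - b)⁻¹ * a := by
  rcases eq_or_ne a b with rfl | hab
  · rfl
  have hd : a - b ≠ 0 := sub_ne_zero.mpr hab
  calc a * (a - b)⁻¹ * b = (a - b + b) * (a - b)⁻¹ * b := by rw [sub_add_cancel]
    _ = b + b * (a - b)⁻¹ * b := by rw [add_mul, mul_inv_cancel₀ hd, add_mul, one_mul]
    _ = b * (a - b)⁻¹ * (a - b + b) := by rw [mul_add, inv_mul_cancel_right₀ hd]
    _ = b * (a - b)⁻¹ * a := by rw [sub_add_cancel]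

end DivisionRing

theorem stmt15_general (R : Type) [DivisionRing R] (x₁ x₂ : R) :
    (x₂ - x₁) * x₂ * (x₂ - x₁)⁻¹ + x₁ = (x₁ - x₂) * x₁ * (x₁ - x₂)⁻¹ + x₂ ∧
    ((x₂ - x₁) * x₂ * (x₂ - x₁)⁻¹) * x₁ = ((x₁ - x₂) * x₁ * (x₁ - x₂)⁻¹) * x₂ := by
  rw [← neg_sub x₂ x₁, neg_mul_mul_inv_neg]
  set d := x₂ - x₁ with hd
  constructor
  · calc d * x₂ * d⁻¹ + x₁ = d * (x₁ + d) * d⁻¹ + x₁ := by rw [hd, add_sub_cancel]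
      _ = d * x₁ * d⁻¹ + (x₂ - x₁) + x₁ := by rw [mul_add, add_mul, mul_self_mul_inv]
      _ = d * x₁ * d⁻¹ + x₂ := by rw [add_assoc, sub_add_cancel]
  · simpa only [mul_assoc] using congrArg (d * ·) (mul_inv_sub_mul_comm x₂ x₁)

/-- For distinct `x₁, x₂` in a division ring, with
`x_{1,2} = (x₂-x₁)x₂(x₂-x₁)⁻¹` and `x_{2,1} = (x₁-x₂)x₁(x₁-x₂)⁻¹`, one has
`x_{1,2} + x₁ = x_{2,1} + x₂` and `x_{1,2}·x₁ = x_{2,1}·x₂`. -/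
theorem stmt15 (R : Type) [DivisionRing R] (x₁ x₂ : R) (h : x₁ ≠ x₂) :
    (x₂ - x₁) * x₂ * (x₂ - x₁)⁻¹ + x₁ = (x₁ - x₂) * x₁ * (x₁ - x₂)⁻¹ + x₂ ∧
    ((x₂ - x₁) * x₂ * (x₂ - x₁)⁻¹) * x₁ = ((x₁ - x₂) * x₁ * (x₁ - x₂)⁻¹) * x₂ :=
  stmt15_general R x₁ x₂
end

section
/- Let (R,D) be a differential division ring and f_1, f_2 ∈ R with f_1 ≠ f_2 (so f_2 - f_1 invertible). Define f_{1,2} = (f_2-f_1)f_2(f_2-f_1)^{-1} + (f_2'-f_1')(f_2-f_1)^{-1} and f_{2,1} = (f_1-f_2)f_1(f_1-f_2)^{-1} + (f_1'-f_2')(f_1-f_2)^{-1}, where a' = D(a). Then f_{1,2} + f_1 = f_{2,1} + f_2 and f_{1,2}·f_1 - f_1' = f_{2,1}·f_2 - f_2'. -/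
/-!
Write `u = f₂ - f₁` and `w = f₂' - f₁'`. Since `(-u)⁻¹ = -u⁻¹`, both `f_{1,2}` and `f_{2,1}` are
conjugates by `u` plus the same term `w u⁻¹`, so `f_{1,2} - f_{2,1} = u (f₂ - f₁) u⁻¹ = u`, which is
the first identity. Multiplying `f_{2,1}` on the right by `u` gives `u f₁ + w`, and substituting
`f_{1,2} = f_{2,1} + u` into the second identity reduces it to exactly this.
-/

section MixedTerm

variable {R : Type*} [DivisionRing R] (D : R → R)

/-- `mixedTerm D f₁ f₂` is the paper's `f_{1,2}`. -/
def mixedTerm (a b : R) : R :=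
  (b - a) * b * (b - a)⁻¹ + (D b - D a) * (b - a)⁻¹

theorem mixedTerm_swap (a b : R) :
    mixedTerm D b a = (b - a) * a * (b - a)⁻¹ + (D b - D a) * (b - a)⁻¹ := by
  rw [mixedTerm, ← neg_sub b a, ← neg_sub (D b) (D a), inv_neg]
  simp only [neg_mul, mul_neg, neg_neg]

variable {D}

theorem mixedTerm_sub_mixedTerm_swap {a b : R} (h : a ≠ b) :
    mixedTerm D a b - mixedTerm D b a = b - a := by
  have hu : b - a ≠ 0 := sub_ne_zero.mpr h.symm
  rw [mixedTerm_swap D a b, mixedTerm, add_sub_add_right_eq_sub, ← sub_mul, ← mul_sub,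
    mul_inv_cancel_right₀ hu]

theorem mixedTerm_swap_mul_sub {a b : R} (h : a ≠ b) :
    mixedTerm D b a * (b - a) = (b - a) * a + (D b - D a) := by
  have hu : b - a ≠ 0 := sub_ne_zero.mpr h.symm
  rw [mixedTerm_swap, add_mul, inv_mul_cancel_right₀ hu, inv_mul_cancel_right₀ hu]

end MixedTerm

theorem stmt17_general (R : Type) [DivisionRing R] (D : R → R)
    (f₁ f₂ : R) (h : f₁ ≠ f₂)
    (f₁₂ f₂₁ : R)
    (h12 : f₁₂ = (f₂ - f₁) * f₂ * (f₂ - f₁)⁻¹ + (D f₂ - D f₁) * (f₂ - f₁)⁻¹)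
    (h21 : f₂₁ = (f₁ - f₂) * f₁ * (f₁ - f₂)⁻¹ + (D f₁ - D f₂) * (f₁ - f₂)⁻¹) :
    f₁₂ + f₁ = f₂₁ + f₂ ∧ f₁₂ * f₁ - D f₁ = f₂₁ * f₂ - D f₂ := by
  have hshift : f₁₂ = f₂₁ + (f₂ - f₁) := by
    rw [h12, h21, ← mixedTerm, ← mixedTerm, ← mixedTerm_sub_mixedTerm_swap h]; abel
  have hprod : f₂₁ * (f₂ - f₁) = (f₂ - f₁) * f₁ + (D f₂ - D f₁) := by
    rw [h21, ← mixedTerm, mixedTerm_swap_mul_sub h]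
  constructor
  · rw [hshift]; abel
  · have hsplit : f₂₁ * f₂ = f₂₁ * f₁ + f₂₁ * (f₂ - f₁) := by rw [mul_sub]; abel
    rw [hshift, hsplit, hprod, add_mul]
    abel

/-- In a differential division ring, for `f₁ ≠ f₂`, with
`f_{1,2} = (f₂-f₁)f₂(f₂-f₁)⁻¹ + (f₂'-f₁')(f₂-f₁)⁻¹` and
`f_{2,1} = (f₁-f₂)f₁(f₁-f₂)⁻¹ + (f₁'-f₂')(f₁-f₂)⁻¹`, one has
`f_{1,2} + f₁ = f_{2,1} + f₂` and `f_{1,2}·f₁ - f₁' = f_{2,1}·f₂ - f₂'`. -/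
theorem stmt17 (R : Type) [DivisionRing R] (D : R → R)
    (hadd : ∀ a b : R, D (a + b) = D a + D b)
    (hmul : ∀ a b : R, D (a * b) = D a * b + a * D b)
    (f₁ f₂ : R) (h : f₁ ≠ f₂)
    (f₁₂ f₂₁ : R)
    (h12 : f₁₂ = (f₂ - f₁) * f₂ * (f₂ - f₁)⁻¹ + (D f₂ - D f₁) * (f₂ - f₁)⁻¹)
    (h21 : f₂₁ = (f₁ - f₂) * f₁ * (f₁ - f₂)⁻¹ + (D f₁ - D f₂) * (f₁ - f₂)⁻¹) :
    f₁₂ + f₁ = f₂₁ + f₂ ∧ f₁₂ * f₁ - D f₁ = f₂₁ * f₂ - D f₂ :=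
  stmt17_general R D f₁ f₂ h f₁₂ f₂₁ h12 h21
end

section
/- Let (R,D) be a differential division ring, and let f_1, f_2 ∈ R with f_2 - f_1 invertible and f_{1,2}, f_{2,1} as in the differential Vieta construction. Then (D - f_{1,2})(D - f_1) = (D - f_{2,1})(D - f_2) as operators on R, i.e., D² - (f_{1,2}+f_1)D + (f_{1,2}f_1 - f_1') = D² - (f_{2,1}+f_2)D + (f_{2,1}f_2 - f_2'). -/
/-- In a differential division ring, with `f_{1,2}` and `f_{2,1}` as in the
differential Vieta construction, the second-order operators
`(D - f_{1,2})(D - f₁)` and `(D - f_{2,1})(D - f₂)` agree on `R`. -/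
theorem stmt18 (R : Type) [DivisionRing R] (D : R → R)
    (hadd : ∀ a b : R, D (a + b) = D a + D b)
    (hmul : ∀ a b : R, D (a * b) = D a * b + a * D b)
    (f₁ f₂ : R) (h : f₁ ≠ f₂)
    (f₁₂ f₂₁ : R)
    (h12 : f₁₂ = (f₂ - f₁) * f₂ * (f₂ - f₁)⁻¹ + (D f₂ - D f₁) * (f₂ - f₁)⁻¹)
    (h21 : f₂₁ = (f₁ - f₂) * f₁ * (f₁ - f₂)⁻¹ + (D f₁ - D f₂) * (f₁ - f₂)⁻¹) :
    ∀ φ : R,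
      D (D φ - f₁ * φ) - f₁₂ * (D φ - f₁ * φ)
        = D (D φ - f₂ * φ) - f₂₁ * (D φ - f₂ * φ) := by
  intro φ
  have hu : f₂ - f₁ ≠ 0 := sub_ne_zero.mpr h.symm
  have hinv : (f₂ - f₁) * (f₂ - f₁)⁻¹ = 1 := mul_inv_cancel₀ hu
  have hinv2 : (f₂ - f₁)⁻¹ * (f₂ - f₁) = 1 := inv_mul_cancel₀ hu
  have hsub : ∀ a b : R, D (a - b) = D a - D b := by
    intro a b
    have h1 := hadd (a - b) b
    rw [sub_add_cancel] at h1
    exact eq_sub_of_add_eq h1.symm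
  have e21 : f₂₁ = (f₂ - f₁) * f₁ * (f₂ - f₁)⁻¹ + (D f₂ - D f₁) * (f₂ - f₁)⁻¹ := by
    rw [h21, ← neg_sub f₂ f₁, ← neg_sub (D f₂) (D f₁), inv_neg]
    noncomm_ring
  rw [hsub, hsub, hmul, hmul, h12, e21]
  linear_combination (norm := noncomm_ring)
    -((f₂ - f₁) * hinv * D φ) + (f₂ - f₁) * hinv * (f₁ * φ)
      - (f₂ - f₁) * f₁ * hinv2 * φ - (D f₂ - D f₁) * hinv2 * φ
end

section
/- In Q_2 (generated by z_1 = z_{∅,1}, z_2 = z_{∅,2}, z_{1,2} = z_{{1},2}, z_{2,1} = z_{{2},1} with relations z_{1,2}+z_1 = z_{2,1}+z_2 and z_{1,2}z_1 = z_{2,1}z_2), the elements Λ = z_1 + z_{1,2}, u = z_{1,2} - z_2, ξ = z_1 - z_2 satisfy [Λ, ξ] + (uξ + ξu) = 0, where [a,b] = ab - ba. -/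
namespace QnPaper

/- With `Λ = a + c`, `u = c - b`, `ξ = a - b`, the left-hand side expands to
`2 * (c * a - (c + a - b) * b)`, and the two relations make `c + a - b = d` and `c * a = d * b`. -/
theorem lie_add_anticomm_eq_zero_of_add_eq_of_mul_eq {R : Type*} [Ring R] {a b c d : R}
    (hadd : c + a = d + b) (hmul : c * a = d * b) :
    ((a + c) * (a - b) - (a - b) * (a + c)) + ((c - b) * (a - b) + (a - b) * (c - b)) = 0 := by
  have expand : ((a + c) * (a - b) - (a - b) * (a + c)) + ((c - b) * (a - b) + (a - b) * (c - b))
      = 2 * (c * a - (c + a - b) * b) := by noncomm_ring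
  rw [expand, hadd, add_sub_cancel_right, hmul, sub_self, mul_zero]

section Relations

variable (k : Type) [Field k] {n : ℕ} (A : Finset (Fin n)) {i j : Fin n}

theorem z_add_z_eq (hi : i ∉ A) (hj : j ∉ A) (hij : i ≠ j) :
    z k n (insert i A) j + z k n A i = z k n (insert j A) i + z k n A j := by
  simpa only [z, map_add] using RingQuot.mkAlgHom_rel k (QRel.add_rel A i j hi hj hij)

theorem z_mul_z_eq (hi : i ∉ A) (hj : j ∉ A) (hij : i ≠ j) :
    z k n (insert i A) j * z k n A i = z k n (insert j A) i * z k n A j := by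
  simpa only [z, map_mul] using RingQuot.mkAlgHom_rel k (QRel.mul_rel A i j hi hj hij)

end Relations

/-- In `Q_2`, with `Λ = z₁ + z_{1,2}`, `u = z_{1,2} - z₂`, `ξ = z₁ - z₂`:
`[Λ, ξ] + (uξ + ξu) = 0`. -/
theorem stmt19 (k : Type) [Field k] (Λ u ξ : Q k 2)
    (hΛ : Λ = z k 2 ∅ 0 + z k 2 {0} 1)
    (hu : u = z k 2 {0} 1 - z k 2 ∅ 1)
    (hξ : ξ = z k 2 ∅ 0 - z k 2 ∅ 1) :
    (Λ * ξ - ξ * Λ) + (u * ξ + ξ * u) = 0 := by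
  subst hΛ hu hξ
  exact lie_add_anticomm_eq_zero_of_add_eq_of_mul_eq
    (z_add_z_eq k ∅ (Finset.notMem_empty 0) (Finset.notMem_empty 1) zero_ne_one)
    (z_mul_z_eq k ∅ (Finset.notMem_empty 0) (Finset.notMem_empty 1) zero_ne_one)
end QnPaper
end
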